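/- Let f_α be the square integer matrix of size n (n = number of inner vertices plus number of independent cycles) whose first rows express the positions h(Vᵢ) = h(V₁) + Σ v(V,e)·l(e) along chosen chains of flags, and whose last g rows are cycle equations Σ v(V,e)·l(e) for chosen generators of H₁(Γ,ℤ). Then |det(f_α)| is independent of the choices of chains of flags and of the generators of H₁(Γ,ℤ), and equals the product of the weights ω(e) over all bounded edges e of Γ. -/

import Mathlib

/-!
Write `f_α = N · diag(1, ω)`, where `N` has rows `(1, z i)` and `(0, w j)`. The rows of `N` span
`ℤ^(1 + #E)`: the `w j` span all cycles, `z root` is a cycle so `(1, 0)` is in the span, and each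
edge `e` is the cycle `e - z (tgt e) + z (src e)` plus a difference of two chains. A square
integer matrix whose rows span `ℤⁿ` has a left inverse, so `det N = ±1`.
-/

open Submodule Set Matrix

theorem Matrix.isUnit_det_submatrix_of_span_row_eq_top {m n R : Type*} [CommRing R] [Fintype m]
    [DecidableEq m] (M : Matrix m n R) (e : m ≃ n) (h : span R (range M.row) = ⊤) :
    IsUnit (M.submatrix id e).det := by
  rw [← isUnit_iff_isUnit_det, ← vecMul_surjective_iff_isUnit]
  intro y
  obtain ⟨x, hx⟩ : y ∘ e.symm ∈ LinearMap.range M.vecMulLinear := by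
    rw [range_vecMulLinear, h]; trivial
  refine ⟨x, funext fun c => ?_⟩
  simpa [vecMul, dotProduct] using congrFun hx (e c)

theorem Submodule.span_range_sumElim_unit_eq_top {R ι κ α : Type*} [Ring R] (z : ι → α → R)
    (w : κ → α → R) (i₀ : ι) (hz₀ : z i₀ ∈ span R (range w))
    (htop : span R (range z) ⊔ span R (range w) = ⊤) :
    span R (range (Sum.elim (fun i => Sum.elim (fun _ : Unit => (1 : R)) (z i))
      (fun j => Sum.elim (fun _ : Unit => (0 : R)) (w j)))) = ⊤ := by
  set S := span R (range (Sum.elim (fun i => Sum.elim (fun _ : Unit => (1 : R)) (z i))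
      (fun j => Sum.elim (fun _ : Unit => (0 : R)) (w j))))
  let φ : (α → R) →ₗ[R] (Unit ⊕ α → R) :=
    (LinearEquiv.sumArrowLequivProdArrow Unit α R R).symm.toLinearMap ∘ₗ LinearMap.inr R _ _
  have hφ : ∀ c, φ c = Sum.elim (fun _ => 0) c := fun c => by
    ext (_ | _) <;> simp [φ]
  have hw : span R (range w) ≤ S.comap φ := by
    rw [span_le]
    rintro _ ⟨j, rfl⟩
    show φ (w j) ∈ S
    rw [hφ]
    exact subset_span ⟨Sum.inr j, rfl⟩
  have hunit : Sum.elim (fun _ => 1) (fun _ => 0) ∈ S := by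
    have : Sum.elim (fun _ => 1) (fun _ => 0) =
        Sum.elim (fun _ : Unit => (1 : R)) (z i₀) - φ (z i₀) := by
      ext (_ | _) <;> simp [hφ]
    rw [this]
    exact sub_mem (subset_span ⟨Sum.inl i₀, rfl⟩) (hw hz₀)
  have hz : span R (range z) ≤ S.comap φ := by
    rw [span_le]
    rintro _ ⟨i, rfl⟩
    have : φ (z i) = Sum.elim (fun _ : Unit => (1 : R)) (z i) -
        Sum.elim (fun _ => 1) (fun _ => 0) := by
      ext (_ | _) <;> simp [hφ]
    rw [SetLike.mem_coe, mem_comap, this]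
    exact sub_mem (subset_span ⟨Sum.inl i, rfl⟩) hunit
  have hφS : ∀ c, φ c ∈ S := fun c => sup_le hz hw (htop ▸ mem_top)
  rw [eq_top_iff]
  intro x _
  have : x = x (Sum.inl ()) • Sum.elim (fun _ => 1) (fun _ => 0) + φ (x ∘ Sum.inr) := by
    ext (_ | _) <;> simp [hφ]
  rw [this]
  exact add_mem (smul_mem _ _ hunit) (hφS _)

/-- Oriented incidence matrix of a multigraph: `c ᵥ* incidence src tgt` is the boundary of the
1-chain `c`. -/
def Matrix.incidence {V E R : Type*} [DecidableEq V] [Ring R] (src tgt : E → V) : Matrix E V R :=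
  of fun e v => (if tgt e = v then 1 else 0) - (if src e = v then 1 else 0)

theorem Matrix.span_range_sup_ker_incidence_eq_top {V E R : Type*} [DecidableEq V] [Fintype E]
    [CommRing R] (src tgt : E → V) (root : V) (z : V → E → R)
    (hz : ∀ i, z i ᵥ* incidence src tgt =
      fun v => (if i = v then 1 else 0) - (if root = v then 1 else 0)) :
    span R (range z) ⊔ LinearMap.ker (incidence (R := R) src tgt).vecMulLinear = ⊤ := by
  classical
  rw [eq_top_iff, ← (Pi.basisFun R E).span_eq, span_le]
  rintro _ ⟨e, rfl⟩
  have hcycle : Pi.single e 1 - z (tgt e) + z (src e) ∈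
      LinearMap.ker (incidence (R := R) src tgt).vecMulLinear := by
    rw [LinearMap.mem_ker, vecMulLinear_apply, add_vecMul, sub_vecMul, single_one_vecMul, hz, hz]
    ext v
    simp only [incidence, row, of_apply, Pi.add_apply, Pi.sub_apply, Pi.zero_apply]
    ring
  have : Pi.basisFun R E e = (Pi.single e 1 - z (tgt e) + z (src e)) + z (tgt e) - z (src e) := by
    rw [Pi.basisFun_apply]; abel
  rw [SetLike.mem_coe, this]
  exact sub_mem (add_mem (mem_sup_right hcycle) (mem_sup_left (subset_span ⟨_, rfl⟩)))
    (mem_sup_left (subset_span ⟨_, rfl⟩))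

theorem det_falpha_eq_prod_weights (V E : Type) [Fintype V] [Fintype E] [DecidableEq V]
    (root : V) (src tgt : E → V) (ω : E → ℕ)
    (g : ℕ)
    (z : V → E → ℤ)
    (hz : ∀ i v : V, ∑ e, z i e *
        ((if tgt e = v then 1 else 0) - (if src e = v then 1 else 0))
        = (if i = v then 1 else 0) - (if root = v then 1 else 0))
    (w : Fin g → E → ℤ)
    (hspan : ∀ c : E → ℤ, (∀ v : V, ∑ e, c e *
        ((if tgt e = v then 1 else 0) - (if src e = v then 1 else 0)) = 0) →
        c ∈ Submodule.span ℤ (Set.range w))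
    (eqv : (V ⊕ Fin g) ≃ (Unit ⊕ E)) :
    ((Matrix.of (fun r c : V ⊕ Fin g =>
        match r, eqv c with
        | Sum.inl i, Sum.inl _ => (1 : ℤ)
        | Sum.inl i, Sum.inr e => z i e * ω e
        | Sum.inr j, Sum.inl _ => 0
        | Sum.inr j, Sum.inr e => w j e * ω e)).det).natAbs = ∏ e, ω e := by
  set rows : V ⊕ Fin g → Unit ⊕ E → ℤ :=
    Sum.elim (fun i => Sum.elim (fun _ => 1) (z i)) (fun j => Sum.elim (fun _ => 0) (w j))
  have hchains : ∀ i, z i ᵥ* incidence src tgt =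
      fun v => (if i = v then 1 else 0) - (if root = v then 1 else 0) := fun i => funext (hz i)
  have hcycles : LinearMap.ker (incidence (R := ℤ) src tgt).vecMulLinear ≤ span ℤ (range w) :=
    fun c hc => hspan c (congrFun hc)
  have hroot : z root ∈ LinearMap.ker (incidence (R := ℤ) src tgt).vecMulLinear := by
    rw [LinearMap.mem_ker, vecMulLinear_apply, hchains]
    ext v
    simp
  have hrows : span ℤ (range (of rows).row) = ⊤ :=
    span_range_sumElim_unit_eq_top z w root (hcycles hroot) <| top_unique <|
      (span_range_sup_ker_incidence_eq_top src tgt root z hchains).ge.trans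
        (sup_le_sup_left hcycles _)
  have hdet : ((of rows).submatrix id eqv *
      diagonal fun c => Sum.elim (fun _ => 1) (fun e => (ω e : ℤ)) (eqv c)).det.natAbs =
      ∏ e, ω e := by
    rw [det_mul, det_diagonal, Int.natAbs_mul,
      Int.natAbs_of_isUnit ((of rows).isUnit_det_submatrix_of_span_row_eq_top eqv hrows),
      one_mul, eqv.prod_comp (Sum.elim _ _), Fintype.prod_sum_type]
    simp [← Nat.cast_prod]
  convert hdet using 3
  ext r c
  rw [mul_diagonal]
  rcases hc : eqv c with _ | e <;> rcases r with i | j <;> simp [rows, hc]
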